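/- Let U ⊆ ℝ² be open with coordinates (v,w), let a, b : U → ℝ be twice continuously differentiable and q, r, m, n : U → ℝ continuously differentiable (with q_v/q continuously differentiable in w, and similarly for r), such that a_v, a_w, b_v, b_w, q, r are nowhere zero and a − b is nowhere zero. Let λ, μ be nonzero real constants with λ ≠ μ. Suppose that both the pair (q,r) and the rescaled pair (λq, μr) satisfy, with the same a, b, m, n, the equations (qr2): (q_v/q)_w = a_{vw}/(a−b) − (a_v(a_w+b_w) + a_w b_v)/(a−b)² + (a_w b_v/(a_v b_w)) m n + 2 a_w² r n/(a_v (a−b) q) and (r_v/r)_w = b_{vw}/(b−a) − (b_w(a_v+b_v) + a_w b_v)/(a−b)² + (a_w b_v/(a_v b_w)) m n + 2 b_v² q m/(b_w (b−a) r). Then m = 0 and n = 0 identically on U. -/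

import Mathlib

/-- Partial derivative of `f : ℝⁿ → ℝ` in the `i`-th coordinate direction. -/
noncomputable def pd {n : ℕ} (i : Fin n) (f : (Fin n → ℝ) → ℝ) (x : Fin n → ℝ) : ℝ :=
  fderiv ℝ f x (Pi.single i 1)

/-- Coordinates on ℝ² are `(v,w)` with indices `(0,1)` (so subscript `v` = `pd 0`,
subscript `w` = `pd 1`).  `QR2 a b q r m n U` says that the equations (qr2):
`(q_v/q)_w = a_{vw}/(a−b) − (a_v(a_w+b_w) + a_w b_v)/(a−b)² + (a_w b_v/(a_v b_w)) m n
+ 2 a_w² r n/(a_v (a−b) q)` and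
`(r_v/r)_w = b_{vw}/(b−a) − (b_w(a_v+b_v) + a_w b_v)/(a−b)² + (a_w b_v/(a_v b_w)) m n
+ 2 b_v² q m/(b_w (b−a) r)` hold on `U`. -/
def QR2 (a b q r m n : (Fin 2 → ℝ) → ℝ) (U : Set (Fin 2 → ℝ)) : Prop :=
  ∀ x ∈ U,
    (pd 1 (fun y => pd 0 q y / q y) x =
      pd 1 (pd 0 a) x / (a x - b x)
      - (pd 0 a x * (pd 1 a x + pd 1 b x) + pd 1 a x * pd 0 b x) / (a x - b x) ^ 2
      + (pd 1 a x * pd 0 b x / (pd 0 a x * pd 1 b x)) * m x * n x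
      + 2 * (pd 1 a x) ^ 2 * r x * n x / (pd 0 a x * (a x - b x) * q x)) ∧
    (pd 1 (fun y => pd 0 r y / r y) x =
      pd 1 (pd 0 b) x / (b x - a x)
      - (pd 1 b x * (pd 0 a x + pd 0 b x) + pd 1 a x * pd 0 b x) / (a x - b x) ^ 2
      + (pd 1 a x * pd 0 b x / (pd 0 a x * pd 1 b x)) * m x * n x
      + 2 * (pd 0 b x) ^ 2 * q x * m x / (pd 1 b x * (b x - a x) * r x))

/-!
Since `(λq)_v / (λq) = q_v / q`, the two instances of (qr2) have the same left-hand sides and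
differ only in their last terms. For the first equation this gives `T = (μ/λ) T` with
`T = 2 a_w² r n / (a_v (a−b) q)`, so `T = 0` as `λ ≠ μ`, and `n = 0` because every other factor
of `T` is nonzero; the second equation gives `m = 0` in the same way.
-/

theorem pd_const_mul {k : ℕ} (i : Fin k) (c : ℝ) (f : (Fin k → ℝ) → ℝ) (x : Fin k → ℝ) :
    pd i (fun y => c * f y) x = c * pd i f x := by
  have h : (fun y => c * f y) = c • f := rfl
  simp [pd, h, fderiv_const_smul_field]

theorem pd_const_mul_div_const_mul {k : ℕ} (i : Fin k) {c : ℝ} (hc : c ≠ 0)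
    (f : (Fin k → ℝ) → ℝ) :
    (fun y => pd i (fun z => c * f z) y / (c * f y)) = fun y => pd i f y / f y := by
  funext y
  rw [pd_const_mul, mul_div_mul_left _ _ hc]

theorem eq_zero_of_mul_div_eq_rescaled {K : Type*} [Field K] {C D s t z lam mu : K}
    (hC : C ≠ 0) (hD : D ≠ 0) (hs : s ≠ 0) (ht : t ≠ 0)
    (hlam : lam ≠ 0) (hlm : lam ≠ mu)
    (h : C * (mu * s) * z / (D * (lam * t)) = C * s * z / (D * t)) : z = 0 := by
  field_simp at h
  have hz : (mu - lam) * z = 0 := by linear_combination h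
  exact (mul_eq_zero.mp hz).resolve_left (sub_ne_zero.mpr hlm.symm)

theorem QR2.rescaled_terms_eq {a b q r m n : (Fin 2 → ℝ) → ℝ} {U : Set (Fin 2 → ℝ)}
    {lam mu : ℝ} (hlam : lam ≠ 0) (hmu : mu ≠ 0) (hQR : QR2 a b q r m n U)
    (hQR' : QR2 a b (fun y => lam * q y) (fun y => mu * r y) m n U) {x : Fin 2 → ℝ}
    (hx : x ∈ U) :
    2 * (pd 1 a x) ^ 2 * (mu * r x) * n x / (pd 0 a x * (a x - b x) * (lam * q x))
        = 2 * (pd 1 a x) ^ 2 * r x * n x / (pd 0 a x * (a x - b x) * q x) ∧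
      2 * (pd 0 b x) ^ 2 * (lam * q x) * m x / (pd 1 b x * (b x - a x) * (mu * r x))
        = 2 * (pd 0 b x) ^ 2 * q x * m x / (pd 1 b x * (b x - a x) * r x) := by
  obtain ⟨hq, hr⟩ := hQR x hx
  obtain ⟨hq', hr'⟩ := hQR' x hx
  rw [pd_const_mul_div_const_mul 0 hlam] at hq'
  rw [pd_const_mul_div_const_mul 0 hmu] at hr'
  constructor <;> linarith

theorem stmt18_general (U : Set (Fin 2 → ℝ))
    (a b q r m n : (Fin 2 → ℝ) → ℝ)
    (hav : ∀ x ∈ U, pd 0 a x ≠ 0) (haw : ∀ x ∈ U, pd 1 a x ≠ 0)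
    (hbv : ∀ x ∈ U, pd 0 b x ≠ 0) (hbw : ∀ x ∈ U, pd 1 b x ≠ 0)
    (hq0 : ∀ x ∈ U, q x ≠ 0) (hr0 : ∀ x ∈ U, r x ≠ 0)
    (hab : ∀ x ∈ U, a x - b x ≠ 0)
    (lam mu : ℝ) (hlam : lam ≠ 0) (hmu : mu ≠ 0) (hlm : lam ≠ mu)
    (hQR : QR2 a b q r m n U)
    (hQR' : QR2 a b (fun y => lam * q y) (fun y => mu * r y) m n U) :
    ∀ x ∈ U, m x = 0 ∧ n x = 0 := by
  intro x hx
  obtain ⟨hn_terms, hm_terms⟩ := hQR.rescaled_terms_eq hlam hmu hQR' hx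
  have hba : b x - a x ≠ 0 := by rw [← neg_sub]; exact neg_ne_zero.mpr (hab x hx)
  exact ⟨eq_zero_of_mul_div_eq_rescaled (by simp [hbv x hx]) (mul_ne_zero (hbw x hx) hba)
      (hq0 x hx) (hr0 x hx) hmu hlm.symm hm_terms,
    eq_zero_of_mul_div_eq_rescaled (by simp [haw x hx]) (mul_ne_zero (hav x hx) (hab x hx))
      (hr0 x hx) (hq0 x hx) hlam hlm hn_terms⟩

/-- If both `(q,r)` and the rescaled pair `(λq, μr)` (with `λ, μ` nonzero constants,
`λ ≠ μ`) satisfy the equations (qr2) with the same `a, b, m, n`, then `m = n = 0` on `U`. -/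
theorem stmt18 (U : Set (Fin 2 → ℝ)) (hU : IsOpen U)
    (a b q r m n : (Fin 2 → ℝ) → ℝ)
    (ha : ContDiffOn ℝ 2 a U) (hb : ContDiffOn ℝ 2 b U)
    (hq : ContDiffOn ℝ 1 q U) (hr : ContDiffOn ℝ 1 r U)
    (hm : ContDiffOn ℝ 1 m U) (hn : ContDiffOn ℝ 1 n U)
    (hqv : ContDiffOn ℝ 1 (fun x => pd 0 q x / q x) U)
    (hrv : ContDiffOn ℝ 1 (fun x => pd 0 r x / r x) U)
    (hav : ∀ x ∈ U, pd 0 a x ≠ 0) (haw : ∀ x ∈ U, pd 1 a x ≠ 0)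
    (hbv : ∀ x ∈ U, pd 0 b x ≠ 0) (hbw : ∀ x ∈ U, pd 1 b x ≠ 0)
    (hq0 : ∀ x ∈ U, q x ≠ 0) (hr0 : ∀ x ∈ U, r x ≠ 0)
    (hab : ∀ x ∈ U, a x - b x ≠ 0)
    (lam mu : ℝ) (hlam : lam ≠ 0) (hmu : mu ≠ 0) (hlm : lam ≠ mu)
    (hQR : QR2 a b q r m n U)
    (hQR' : QR2 a b (fun y => lam * q y) (fun y => mu * r y) m n U) :
    ∀ x ∈ U, m x = 0 ∧ n x = 0 :=
  stmt18_general U a b q r m n hav haw hbv hbw hq0 hr0 hab lam mu hlam hmu hlm hQR hQR'
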